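/- Fix an odd positive integer ℓ. There exists μ₀ > 0 such that for every integer μ > μ₀, the determinant of the (ℓ+1) × (ℓ+1) matrix A⁺(μ), whose (i,j)-entry is m_{i+j-1}(μ), satisfies |det(A⁺(μ))| ≥ 1. -/

import Mathlib

/-!
With `X ∼ N(0,1)`, the `(i,j)`-entry of `A⁺(μ)` is `E[(X+μ)^i (X+μ)^j (X+μ)]`. Expanding
`(X+μ)^i` binomially gives `A⁺(μ) = S (G + μH) Sᵀ`, where `S` is unipotent lower triangular and
`G`, `H` are the Hankel matrices of the moments `E[X^(a+b+1)]` and `E[X^(a+b)]`. The matrix `H`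
is positive definite, since a nonzero polynomial vanishes only on a Lebesgue-null set, so
`det A⁺(μ) = det (G + μH) = μ^(ℓ+1) det (H + μ⁻¹G)` tends to `+∞` with `μ`.
-/

open MeasureTheory ProbabilityTheory

noncomputable def gaussMoment (μ : ℝ) (k : ℕ) : ℝ :=
  ∫ x, x ^ k ∂(gaussianReal μ 1)

/-- The (ℓ+1) × (ℓ+1) Hankel matrix whose (i,j)-entry (1 ≤ i,j ≤ ℓ+1) is m_{i+j-1}(μ). -/
noncomputable def Aplus (ℓ : ℕ) (μ : ℝ) : Matrix (Fin (ℓ + 1)) (Fin (ℓ + 1)) ℝ :=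
  Matrix.of fun i j => gaussMoment μ (i.val + j.val + 1)

open Polynomial Filter Topology Matrix

section HankelMatrix

variable {R : Type*} [CommRing R] (L : R[X] →ₗ[R] R) (n : ℕ)

noncomputable def hankelMatrix (q : R[X]) : Matrix (Fin n) (Fin n) R :=
  of fun a b => L (X ^ (a.val + b.val) * q)

lemma hankelMatrix_X_add_C (r : R) :
    hankelMatrix L n (X + C r) = hankelMatrix L n X + r • hankelMatrix L n 1 := by
  ext a b
  simp [hankelMatrix, mul_add, mul_comm _ (C r), ← smul_eq_C_mul]

lemma sum_sum_mul_hankelMatrix_mul [DecidableEq R] (q : R[X]) (u v : Fin n → R) :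
    ∑ a, ∑ b, u a * hankelMatrix L n q a b * v b = L (ofFn n u * ofFn n v * q) := by
  rw [ofFn_eq_sum_monomial, ofFn_eq_sum_monomial, Finset.sum_mul_sum, Finset.sum_mul, map_sum]
  refine Finset.sum_congr rfl fun a _ => ?_
  rw [Finset.sum_mul, map_sum]
  refine Finset.sum_congr rfl fun b _ => ?_
  have hterm :
      monomial a (u a) * monomial b (v b) * q = (u a * v b) • (X ^ (a.val + b.val) * q) := by
    simp only [← C_mul_X_pow_eq_monomial, smul_eq_C_mul, map_mul, pow_add]
    ring
  rw [hterm, map_smul, smul_eq_mul, hankelMatrix, of_apply]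
  ring

noncomputable def taylorShiftMatrix (r : R) : Matrix (Fin n) (Fin n) R :=
  of fun i a => (taylor r (X ^ i.val)).coeff a

lemma ofFn_taylorShiftMatrix [DecidableEq R] (r : R) (i : Fin n) :
    ofFn n (taylorShiftMatrix n r i) = taylor r (X ^ i.val) := by
  have hdeg : (taylor r (X ^ i.val)).natDegree < n := by
    rw [taylor_X_pow]
    calc ((X + C r) ^ i.val).natDegree ≤ i.val * 1 :=
          natDegree_pow_le_of_le _ (natDegree_add_C.trans_le natDegree_X_le)
      _ < n := by simp
  exact ofFn_comp_toFn_eq_id_of_natDegree_lt hdeg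

lemma det_taylorShiftMatrix (r : R) : (taylorShiftMatrix n r).det = 1 := by
  rw [det_of_isLowerTriangular]
  · refine Finset.prod_eq_one fun i _ => ?_
    simp [taylorShiftMatrix, coeff_X_add_C_pow]
  · intro i a hia
    have hia' : i.val < a.val := hia
    simp [taylorShiftMatrix, coeff_X_add_C_pow, Nat.choose_eq_zero_of_lt hia']

lemma hankelMatrix_comp_taylor (r : R) (q : R[X]) :
    hankelMatrix (L ∘ₗ taylor r) n q =
      taylorShiftMatrix n r * hankelMatrix L n (taylor r q) * (taylorShiftMatrix n r)ᵀ := by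
  classical
  ext i j
  have : (taylorShiftMatrix n r * hankelMatrix L n (taylor r q) * (taylorShiftMatrix n r)ᵀ) i j
      = ∑ a, ∑ b, taylorShiftMatrix n r i a * hankelMatrix L n (taylor r q) a b *
          taylorShiftMatrix n r j b := by
    simp only [mul_apply, transpose_apply, Finset.sum_mul]
    exact Finset.sum_comm
  rw [this, sum_sum_mul_hankelMatrix_mul, ofFn_taylorShiftMatrix, ofFn_taylorShiftMatrix,
    hankelMatrix, of_apply, LinearMap.comp_apply, taylor_mul, pow_add, taylor_mul]

lemma det_hankelMatrix_comp_taylor_X (r : R) :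
    (hankelMatrix (L ∘ₗ taylor r) n X).det = (hankelMatrix L n X + r • hankelMatrix L n 1).det := by
  rw [hankelMatrix_comp_taylor, taylor_X, hankelMatrix_X_add_C, det_mul, det_mul, det_transpose,
    det_taylorShiftMatrix, one_mul, mul_one]

end HankelMatrix

lemma hankelMatrix_one_posDef (L : ℝ[X] →ₗ[ℝ] ℝ) (hL : ∀ p : ℝ[X], p ≠ 0 → 0 < L (p * p))
    (n : ℕ) : (hankelMatrix L n 1).PosDef := by
  classical
  refine posDef_iff_dotProduct_mulVec.2 ⟨?_, fun v hv => ?_⟩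
  · ext a b
    simp [hankelMatrix, add_comm]
  · have hquad : star v ⬝ᵥ (hankelMatrix L n 1 *ᵥ v) = L (ofFn n v * ofFn n v * 1) := by
      rw [← sum_sum_mul_hankelMatrix_mul]
      simp [dotProduct, mulVec, Finset.mul_sum, mul_assoc]
    rw [hquad, mul_one]
    exact hL _ ((injective_ofFn n).ne_iff' (map_zero _) |>.2 hv)

section MomentFunctional

variable {ν : Measure ℝ}

lemma integrable_eval_of_integrable_pow (hν : ∀ k : ℕ, Integrable (fun x => x ^ k) ν)
    (p : ℝ[X]) : Integrable (fun x => p.eval x) ν := by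
  simp_rw [eval_eq_sum_range]
  exact integrable_finsetSum _ fun k _ => (hν k).const_mul _

variable (ν) in
noncomputable def momentFunctional (hν : ∀ k : ℕ, Integrable (fun x => x ^ k) ν) :
    ℝ[X] →ₗ[ℝ] ℝ where
  toFun p := ∫ x, p.eval x ∂ν
  map_add' p q := by
    simp only [eval_add]
    exact integral_add (integrable_eval_of_integrable_pow hν p)
      (integrable_eval_of_integrable_pow hν q)
  map_smul' c p := by
    simp only [eval_smul, smul_eq_mul, RingHom.id_apply]
    exact integral_const_mul c _

lemma momentFunctional_apply (hν : ∀ k : ℕ, Integrable (fun x => x ^ k) ν) (p : ℝ[X]) :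
    momentFunctional ν hν p = ∫ x, p.eval x ∂ν := rfl

lemma momentFunctional_mul_self_pos [NeZero ν] (hν : ∀ k : ℕ, Integrable (fun x => x ^ k) ν)
    (hac : ν ≪ volume) {p : ℝ[X]} (hp : p ≠ 0) : 0 < momentFunctional ν hν (p * p) := by
  have hroots : ν {x | p.IsRoot x} = 0 := hac ((finite_setOfPred_isRoot hp).measure_zero volume)
  have hsupp : Function.support (fun x => (p * p).eval x) = Set.univ \ {x | p.IsRoot x} := by
    ext x
    simp [IsRoot]
  rw [momentFunctional_apply, integral_pos_iff_support_of_nonneg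
    (fun x => by simpa using mul_self_nonneg (p.eval x)) (integrable_eval_of_integrable_pow hν _),
    hsupp, measure_sdiff_null hroots]
  exact Measure.measure_univ_pos.2 (NeZero.ne ν)

end MomentFunctional

lemma integrable_pow_gaussianReal (μ : ℝ) (v : NNReal) (k : ℕ) :
    Integrable (fun x => x ^ k) (gaussianReal μ v) :=
  integrable_pow_of_mem_interior_integrableExpSet
    (by simp [integrableExpSet_fun_id_gaussianReal]) k

lemma momentFunctional_gaussianReal (μ : ℝ) (v : NNReal) :
    momentFunctional (gaussianReal μ v) (integrable_pow_gaussianReal μ v) =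
      momentFunctional (gaussianReal 0 v) (integrable_pow_gaussianReal 0 v) ∘ₗ taylor μ := by
  refine LinearMap.ext fun p => ?_
  have hmap : gaussianReal μ v = (gaussianReal 0 v).map (· + μ) := by
    rw [gaussianReal_map_add_const, zero_add]
  rw [LinearMap.comp_apply, momentFunctional_apply, momentFunctional_apply, hmap,
    integral_map (by fun_prop) (by fun_prop)]
  simp only [taylor_eval]

lemma tendsto_det_add_smul_atTop {ι : Type*} [Fintype ι] [DecidableEq ι] [Nonempty ι]
    (G H : Matrix ι ι ℝ) (hH : 0 < H.det) :
    Tendsto (fun t : ℝ => (G + t • H).det) atTop atTop := by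
  -- for `t > 0`, `det (G + t • H) = t ^ card ι * det (H + t⁻¹ • G)`
  have hlim : Tendsto (fun t : ℝ => (H + t⁻¹ • G).det) atTop (𝓝 H.det) := by
    have : Tendsto (fun t : ℝ => H + t⁻¹ • G) atTop (𝓝 (H + (0 : ℝ) • G)) :=
      tendsto_const_nhds.add (tendsto_inv_atTop_zero.smul_const G)
    have hdet := (continuous_id.matrix_det.tendsto _).comp this
    rwa [zero_smul, add_zero] at hdet
  have hpow : Tendsto (fun t : ℝ => t ^ Fintype.card ι) atTop atTop :=
    tendsto_pow_atTop Fintype.card_ne_zero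
  refine (hpow.atTop_mul_pos hH hlim).congr' ?_
  filter_upwards [eventually_gt_atTop 0] with t ht
  rw [← det_smul, smul_add, smul_smul, mul_inv_cancel₀ ht.ne', one_smul, add_comm]

lemma Aplus_eq_hankelMatrix (ℓ : ℕ) (μ : ℝ) :
    Aplus ℓ μ = hankelMatrix
      (momentFunctional (gaussianReal μ 1) (integrable_pow_gaussianReal μ 1)) (ℓ + 1) X := by
  ext i j
  simp [Aplus, gaussMoment, hankelMatrix, momentFunctional_apply, pow_succ]

lemma tendsto_det_Aplus_atTop (ℓ : ℕ) : Tendsto (fun μ => (Aplus ℓ μ).det) atTop atTop := by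
  set L := momentFunctional (gaussianReal 0 1) (integrable_pow_gaussianReal 0 1)
  have hdet (μ : ℝ) :
      (hankelMatrix L (ℓ + 1) X + μ • hankelMatrix L (ℓ + 1) 1).det = (Aplus ℓ μ).det := by
    rw [Aplus_eq_hankelMatrix, momentFunctional_gaussianReal μ 1, det_hankelMatrix_comp_taylor_X]
  have hH : (hankelMatrix L (ℓ + 1) 1).PosDef := hankelMatrix_one_posDef L
    (fun p hp => momentFunctional_mul_self_pos _
      (gaussianReal_absolutelyContinuous 0 one_ne_zero) hp) _
  exact (tendsto_det_add_smul_atTop _ _ hH.det_pos).congr hdet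

theorem stmt3_general (ℓ : ℕ) :
    ∃ μ₀ : ℝ, 0 < μ₀ ∧ ∀ μ : ℤ, μ₀ < (μ : ℝ) → 1 ≤ |(Aplus ℓ (μ : ℝ)).det| := by
  obtain ⟨N, hN⟩ := eventually_atTop.1 ((tendsto_det_Aplus_atTop ℓ).eventually_ge_atTop 1)
  refine ⟨max N 1, by positivity, fun μ hμ => ?_⟩
  exact (hN μ ((le_max_left N 1).trans hμ.le)).trans (le_abs_self _)

/-- For odd positive ℓ, there is μ₀ > 0 such that |det A⁺(μ)| ≥ 1 for every integer μ > μ₀. -/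
theorem stmt3 (ℓ : ℕ) (hpos : 0 < ℓ) (hodd : Odd ℓ) :
    ∃ μ₀ : ℝ, 0 < μ₀ ∧ ∀ μ : ℤ, μ₀ < (μ : ℝ) → 1 ≤ |(Aplus ℓ (μ : ℝ)).det| :=
  stmt3_general ℓ
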